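/- arXiv:2301.09335 — 3 statements merged into one kernel-verified Lean document; each statement's English description precedes it below -/
import Mathlib

section
/- If z₁ = 1/2 - sin(2π/9)/√3 and z₂ = 1/2 - sin(2π/9 + 2π/3)/√3, then z₂ = 1/(8 sin²(2π/9)). -/
/-! With `s = sin (2π/9)`, the triple-angle formula gives `4 s³ - 3 s + √3/2 = 0`, and since
`π/2 - 4π/9 = 2π/9 - π/6` one gets `cos (4π/9) = sin (2π/9 - π/6)`, which expresses `cos (2π/9)`
as a polynomial in `s`. Expanding `sin (2π/9 + 2π/3)` then reduces the claim to a polynomial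
identity in `s` and `√3` that follows from these two relations and `√3² = 3`. -/

open Real

lemma Real.sin_add_two_pi_div_three (x : ℝ) :
    sin (x + 2 * π / 3) = (√3 * cos x - sin x) / 2 := by
  have h : 2 * π / 3 = π - π / 3 := by ring
  rw [sin_add, h, sin_pi_sub, cos_pi_sub, sin_pi_div_three, cos_pi_div_three]
  ring

lemma Real.sin_two_pi_div_nine_cubic :
    4 * sin (2 * π / 9) ^ 3 - 3 * sin (2 * π / 9) + √3 / 2 = 0 := by
  have h := sin_three_mul (2 * π / 9)
  rw [show 3 * (2 * π / 9) = π - π / 3 by ring, sin_pi_sub, sin_pi_div_three] at h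
  linarith

lemma Real.cos_two_pi_div_nine_eq :
    cos (2 * π / 9) = √3 * sin (2 * π / 9) + 4 * sin (2 * π / 9) ^ 2 - 2 := by
  have h : cos (2 * (2 * π / 9)) = sin (2 * π / 9 - π / 6) := by
    rw [← sin_pi_div_two_sub]; ring_nf
  rw [cos_two_mul, sin_sub, sin_pi_div_six, cos_pi_div_six, cos_sq'] at h
  linarith

theorem root_identity_general (z₂ : ℝ)
    (h2 : z₂ = 1/2 - Real.sin (2*Real.pi/9 + 2*Real.pi/3) / Real.sqrt 3) :
    z₂ = 1 / (8 * (Real.sin (2*Real.pi/9))^2) := by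
  have hs : sin (2 * π / 9) ≠ 0 :=
    (sin_pos_of_pos_of_lt_pi (by positivity) (by linarith [pi_pos])).ne'
  have h3 : √3 ≠ 0 := by positivity
  rw [h2, sin_add_two_pi_div_three, cos_two_pi_div_nine_eq]
  field_simp
  linear_combination (-8 * √3 * sin (2 * π / 9) - 4) * sin_two_pi_div_nine_cubic
    + (4 * sin (2 * π / 9) - 8 * sin (2 * π / 9) ^ 3) * sq_sqrt (show (0 : ℝ) ≤ 3 by norm_num)

theorem root_identity (z₁ z₂ : ℝ)
    (h1 : z₁ = 1/2 - Real.sin (2*Real.pi/9) / Real.sqrt 3)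
    (h2 : z₂ = 1/2 - Real.sin (2*Real.pi/9 + 2*Real.pi/3) / Real.sqrt 3) :
    z₂ = 1 / (8 * (Real.sin (2*Real.pi/9))^2) :=
  root_identity_general z₂ h2
end

section
/- With c₂ = 1/2 - sin(2π/9)/√3 and c₃ = 1/2 - sin(π/9)/√3, the identity c₃ = c₂(1 - c₂)/(1/2 - c₂) holds. -/
open Real

/-- With `θ = π/9` this is the product-to-sum expansion of
`2 sin 2θ (sin 2θ + sin 3θ - sin θ) = 1 + cos 3θ - (cos 4θ + cos 5θ)`, where `cos 3θ = 1/2` and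
`cos 5θ = -cos 4θ` because `4θ + 5θ = π`. -/
lemma sin_two_pi_div_nine_mul_eq :
    sin (2 * π / 9) * (sin (2 * π / 9) + √3 / 2 - sin (π / 9)) = 3 / 4 := by
  have hsq := two_mul_sin_mul_sin (2 * π / 9) (2 * π / 9)
  have hthird := two_mul_sin_mul_sin (π / 3) (2 * π / 9)
  have hninth := two_mul_sin_mul_sin (2 * π / 9) (π / 9)
  have hsupp : cos (π / 3 + 2 * π / 9) = -cos (2 * π / 9 + 2 * π / 9) := by
    rw [← cos_pi_sub]; ring_nf
  rw [sin_pi_div_three] at hthird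
  rw [show π / 3 - 2 * π / 9 = 2 * π / 9 - π / 9 by ring] at hthird
  rw [show 2 * π / 9 + π / 9 = π / 3 by ring, cos_pi_div_three] at hninth
  rw [sub_self, cos_zero] at hsq
  linear_combination (hsq + hthird - hninth - hsupp) / 2

theorem c3_of_c2 (c₂ c₃ : ℝ)
    (h2 : c₂ = 1/2 - Real.sin (2*Real.pi/9) / Real.sqrt 3)
    (h3 : c₃ = 1/2 - Real.sin (Real.pi/9) / Real.sqrt 3) :
    c₃ = c₂ * (1 - c₂) / (1/2 - c₂) := by
  have hsin : 0 < sin (2 * π / 9) := sin_pos_of_pos_of_lt_pi (by positivity) (by linarith [pi_pos])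
  have hsqrt : √3 ^ 2 = 3 := sq_sqrt (by norm_num)
  -- Writing `c₂ = 1/2 - u` and `c₃ = 1/2 - v`, the claim is `u * (u + 1/2 - v) = 1/4`.
  subst h2 h3
  field_simp
  linear_combination 4 * sin_two_pi_div_nine_mul_eq - hsqrt
end

section
/- For the 8-stage method of eq. (3) with c₂ = 1/2 - sin(2π/9)/√3, c₃ = 1/2 - sin(π/9)/√3, the order-4 conditions hold: b·𝟙 = 1, b·c = 1/2, b·c² = 1/3, b·(Ac) = 1/6, b·c³ = 1/4, b·(c∘(Ac)) = 1/8, b·(Ac²) = 1/12, b·(A²c) = 1/24. -/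
open Matrix

noncomputable def c₂ : ℝ := 1/2 - Real.sin (2*Real.pi/9) / Real.sqrt 3
noncomputable def c₃ : ℝ := 1/2 - Real.sin (Real.pi/9) / Real.sqrt 3

noncomputable def c8 : Fin 8 → ℝ := ![0, c₂, c₃, 1/2, 1/2, 1-c₃, 1-c₂, 1]

noncomputable def b8 : Fin 8 → ℝ :=
  ![c₂/2, c₃/2, 1/4-c₂, 0, 1/2+c₂-c₃, 1/4-c₂, c₃/2, c₂/2]

noncomputable def A8 : Matrix (Fin 8) (Fin 8) ℝ :=
  !![0,        0,           0,          0,        0,           0,        0,   0;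
     c₂,       0,           0,          0,        0,           0,        0,   0;
     0,        c₃,          0,          0,        0,           0,        0,   0;
     1/2-c₂,   c₂+c₃-1,     1-c₃,       0,        0,           0,        0,   0;
     2*c₂*c₃,  (1-2*c₃)*c₃, (1-4*c₂)*c₃, 4*c₂*c₃, 0,           0,        0,   0;
     0,        c₃,          0,          4*c₂-2,   1/(2*c₂)-2,  0,        0,   0;
     c₂,       0,           1/2-2*c₂,   2-4*c₂,   6*c₂-2,      1/2-2*c₂, 0,   0;
     0,        c₃,          0,          4*c₂-2,   1/(2*c₂)-2,  0,        c₃,  0]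

/-!
Write `x = 1/2 - c₂ = sin(2π/9)/√3`. Since `sin(3 · 2π/9) = √3/2`, the triple-angle formula makes `x`
a root of `24x³ - 6x + 1`, i.e. `c₂` a root of `24t³ - 36t² + 12t - 1`; and the sum-to-product formula
`sin(2π/9) - sin(π/9) = √3 cos(4π/9)` gives `c₃ = 7c₂ - 6c₂² - 1/2`. Along this curve the cubic also
inverts `c₂` polynomially, `1/(2c₂) = 12c₂² - 18c₂ + 6`, so each order condition becomes a polynomial
identity in `c₂` modulo the cubic, and holds for every root of it.
-/

def OrderFourConditions {s : ℕ} (A : Matrix (Fin s) (Fin s) ℝ) (b c : Fin s → ℝ) : Prop :=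
  (∑ i, b i) = 1 ∧
  (∑ i, b i * c i) = 1/2 ∧
  (∑ i, b i * (c i)^2) = 1/3 ∧
  (∑ i, b i * (A.mulVec c) i) = 1/6 ∧
  (∑ i, b i * (c i)^3) = 1/4 ∧
  (∑ i, b i * (c i * (A.mulVec c) i)) = 1/8 ∧
  (∑ i, b i * (A.mulVec (fun j => (c j)^2)) i) = 1/12 ∧
  (∑ i, b i * (A.mulVec (A.mulVec c)) i) = 1/24

namespace EightStage

noncomputable def nodes (p q : ℝ) : Fin 8 → ℝ := ![0, p, q, 1/2, 1/2, 1-q, 1-p, 1]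

noncomputable def weights (p q : ℝ) : Fin 8 → ℝ :=
  ![p/2, q/2, 1/4-p, 0, 1/2+p-q, 1/4-p, q/2, p/2]

noncomputable def matrix (p q : ℝ) : Matrix (Fin 8) (Fin 8) ℝ :=
  !![0,       0,          0,          0,       0,          0,       0, 0;
     p,       0,          0,          0,       0,          0,       0, 0;
     0,       q,          0,          0,       0,          0,       0, 0;
     1/2-p,   p+q-1,      1-q,        0,       0,          0,       0, 0;
     2*p*q,   (1-2*q)*q,  (1-4*p)*q,  4*p*q,   0,          0,       0, 0;
     0,       q,          0,          4*p-2,   1/(2*p)-2,  0,       0, 0;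
     p,       0,          1/2-2*p,    2-4*p,   6*p-2,      1/2-2*p, 0, 0;
     0,       q,          0,          4*p-2,   1/(2*p)-2,  0,       q, 0]

theorem orderFourConditions_of_cubic {p q : ℝ} (hp : 24*p^3 - 36*p^2 + 12*p - 1 = 0)
    (hq : q = 7*p - 6*p^2 - 1/2) :
    OrderFourConditions (matrix p q) (weights p q) (nodes p q) := by
  subst hq
  have hinv : 1/(2*p) = 12*p^2 - 18*p + 6 := by
    have : p ≠ 0 := by rintro rfl; norm_num at hp
    field_simp
    linear_combination -hp
  refine ⟨?_, ?_, ?_, ?_, ?_, ?_, ?_, ?_⟩ <;>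
    simp only [matrix, weights, nodes, mulVec, dotProduct, Fin.sum_univ_eight, of_apply, cons_val, hinv]
  · ring
  · ring
  · linear_combination (-7/24 + 3*p - 3*p^2) * hp
  · linear_combination (-5/24 + 39/4*p - 63*p^2 + 108*p^3 - 54*p^4) * hp
  · linear_combination (-7/16 + 9/2*p - 9/2*p^2) * hp
  · linear_combination (-1/4 + 51/8*p - 33*p^2 + 54*p^3 - 27*p^4) * hp
  · linear_combination (19/48 - 71/8*p + 96*p^2 - 444*p^3 + 861*p^4 - 720*p^5 + 216*p^6) * hp
  · linear_combination
      (-23/24 + 179/8*p - 547/4*p^2 + 459/2*p^3 + 102*p^4 - 432*p^5 + 216*p^6) * hp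

end EightStage

open Real

theorem c₂_cubic : 24*c₂^3 - 36*c₂^2 + 12*c₂ - 1 = 0 := by
  have hr : √3 ≠ 0 := by positivity
  have h3 : √3 ^ 2 = 3 := sq_sqrt (by norm_num)
  have htriple : 3 * sin (2*π/9) - 4 * sin (2*π/9) ^ 3 = √3 / 2 := by
    rw [← sin_three_mul, show 3 * (2*π/9) = π - π/3 by ring, sin_pi_sub, sin_pi_div_three]
  unfold c₂
  field_simp
  linear_combination 48 * htriple + (48 * sin (2*π/9) - 8 * √3) * h3

theorem c₃_eq_of_c₂ : c₃ = 7*c₂ - 6*c₂^2 - 1/2 := by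
  have h3 : √3 ^ 2 = 3 := sq_sqrt (by norm_num)
  have hdiff : sin (2*π/9) - sin (π/9) = √3 * cos (4*π/9) := by
    rw [sin_sub_sin, show (2*π/9 - π/9) / 2 = π/2 - 4*π/9 by ring, sin_pi_div_two_sub,
      show (2*π/9 + π/9) / 2 = π/6 by ring, cos_pi_div_six]
    ring
  have hcos : cos (4*π/9) = 1 - 2 * sin (2*π/9) ^ 2 := by
    rw [show 4*π/9 = 2 * (2*π/9) by ring, cos_two_mul', cos_sq']
    ring
  unfold c₂ c₃
  field_simp
  linear_combination 4 * √3 * hdiff + 12 * hcos + (4 * cos (4*π/9) - 4) * h3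

theorem eight_stage_order_four :
    (∑ i, b8 i) = 1 ∧
    (∑ i, b8 i * c8 i) = 1/2 ∧
    (∑ i, b8 i * (c8 i)^2) = 1/3 ∧
    (∑ i, b8 i * (A8.mulVec c8) i) = 1/6 ∧
    (∑ i, b8 i * (c8 i)^3) = 1/4 ∧
    (∑ i, b8 i * (c8 i * (A8.mulVec c8) i)) = 1/8 ∧
    (∑ i, b8 i * (A8.mulVec (fun j => (c8 j)^2)) i) = 1/12 ∧
    (∑ i, b8 i * (A8.mulVec (A8.mulVec c8)) i) = 1/24 :=
  EightStage.orderFourConditions_of_cubic c₂_cubic c₃_eq_of_c₂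
end
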